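/- arXiv:1702.07597 — 4 statements merged into one kernel-verified Lean document; each statement's English description precedes it below -/
import Mathlib

section
/- Let A be an n×n complex matrix, λ ∈ ℂ, and let w¹, …, w^m ∈ ℂⁿ be a Jordan chain of the adjoint: Aᴴ wⁱ = \overline{λ} wⁱ + w^{i+1} for 1 ≤ i < m, and Aᴴ w^m = \overline{λ} w^m. Define the generalized Koopman eigenfunctions φⁱ(x) = ⟨x, wⁱ⟩. Then for every t ∈ ℝ, every x ∈ ℂⁿ, and every 1 ≤ i ≤ m, ⟨exp(tA) x, wⁱ⟩ = e^{λ t} Σ_{n=0}^{m−i} (tⁿ/n!) ⟨x, w^{i+n}⟩; i.e., the generalized eigenfunctions evolve under the Koopman operator as U^t φⁱ = e^{λt} Σ_{n=0}^{m−i} (tⁿ/n!) φ^{i+n}. -/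
/-!
Taking adjoints, `⟨exp(tA) x, wⁱ⟩ = ⟨x, exp(tAᴴ) wⁱ⟩`. Write `Aᴴ = conj λ • 1 + N`: the chain
relations say exactly that `N` shifts `wⁱ ↦ wⁱ⁺¹ ↦ ⋯ ↦ wᵐ ↦ 0`, so the scalar part contributes
the factor `e^{λ̄t}` and the exponential series of `tN` applied to `wⁱ` stops after `m - i + 1`
terms.
-/

open scoped Matrix Nat
open NormedSpace Finset

namespace Matrix

variable {ι : Type*} [Fintype ι]

theorem mulVec_dotProduct_star {R : Type*} [CommSemiring R] [StarRing R]
    (M : Matrix ι ι R) (v u : ι → R) : M *ᵥ v ⬝ᵥ star u = v ⬝ᵥ star (Mᴴ *ᵥ u) := by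
  rw [star_mulVec, conjTranspose_conjTranspose, dotProduct_comm, dotProduct_mulVec,
    dotProduct_comm]

theorem pow_sub_smul_one_mulVec_of_chain {R : Type*} [CommRing R] [DecidableEq ι]
    (B : Matrix ι ι R) (μ : R) {m : ℕ} {w : ℕ → ι → R}
    (hchain : ∀ i, 1 ≤ i → i < m → B *ᵥ w i = μ • w i + w (i + 1))
    (hlast : B *ᵥ w m = μ • w m) {i : ℕ} (hi : 1 ≤ i) (him : i ≤ m) (l : ℕ) :
    (B - μ • 1) ^ l *ᵥ w i = if i + l ≤ m then w (i + l) else 0 := by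
  induction l with
  | zero => simp [him]
  | succ l ih =>
    rw [pow_succ', ← mulVec_mulVec, ih, sub_mulVec, smul_mulVec, one_mulVec]
    rcases lt_trichotomy (i + l) m with hlt | heq | hgt
    · rw [if_pos hlt.le, if_pos (by omega), hchain _ (by omega) hlt, ← add_assoc]
      abel
    · rw [if_pos heq.le, if_neg (by omega), heq, hlast, sub_self]
    · rw [if_neg (by omega), if_neg (by omega), mulVec_zero, smul_zero, sub_zero]

variable [DecidableEq ι] {𝕂 : Type*} [RCLike 𝕂]

open scoped Matrix.Norms.Operator in
theorem exp_mulVec_of_pow_mulVec_eq_zero (M : Matrix ι ι 𝕂) {v : ι → 𝕂} {p : ℕ}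
    (hp : M ^ p *ᵥ v = 0) : exp M *ᵥ v = ∑ k ∈ range p, (k !⁻¹ : 𝕂) • (M ^ k *ᵥ v) := by
  have hexp : HasSum (fun k => ((k !⁻¹ : 𝕂) • M ^ k) *ᵥ v) (exp M *ᵥ v) := by
    rw [exp_eq_tsum 𝕂]
    exact (expSeries_summable' (𝕂 := 𝕂) M).hasSum.map (mulVec.addMonoidHomLeft v)
      (continuous_id.matrix_mulVec continuous_const)
  simp_rw [← smul_mulVec]
  refine hexp.unique (hasSum_sum_of_ne_finset_zero fun k hk => ?_)
  rw [mem_range, not_lt] at hk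
  rw [smul_mulVec, ← Nat.sub_add_cancel hk, pow_add, ← mulVec_mulVec, hp, mulVec_zero, smul_zero]

theorem exp_smul_one_add (c : 𝕂) (M : Matrix ι ι 𝕂) :
    exp (c • (1 : Matrix ι ι 𝕂) + M) = exp c • exp M := by
  rw [Matrix.exp_add_of_commute _ _ ((Commute.one_left M).smul_left c),
    ← Algebra.algebraMap_eq_smul_one, algebraMap_eq_diagonal, exp_diagonal, ← algebraMap_exp_comm,
    ← algebraMap_eq_diagonal, ← Algebra.smul_def]

theorem exp_smul_mulVec_of_chain (B : Matrix ι ι 𝕂) (μ : 𝕂) {m : ℕ} {w : ℕ → ι → 𝕂}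
    (hchain : ∀ i, 1 ≤ i → i < m → B *ᵥ w i = μ • w i + w (i + 1))
    (hlast : B *ᵥ w m = μ • w m) {i : ℕ} (hi : 1 ≤ i) (him : i ≤ m) (t : 𝕂) :
    exp (t • B) *ᵥ w i = exp (t * μ) • ∑ l ∈ range (m - i + 1), (t ^ l / l !) • w (i + l) := by
  have hpow := pow_sub_smul_one_mulVec_of_chain B μ hchain hlast hi him
  have hsplit : t • B = (t * μ) • (1 : Matrix ι ι 𝕂) + t • (B - μ • 1) := by
    rw [smul_sub, smul_smul, add_sub_cancel]
  have hnil : (t • (B - μ • 1)) ^ (m - i + 1) *ᵥ w i = 0 := by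
    rw [smul_pow, smul_mulVec, hpow, if_neg (by omega), smul_zero]
  rw [hsplit, exp_smul_one_add, smul_mulVec, exp_mulVec_of_pow_mulVec_eq_zero _ hnil]
  refine congrArg _ (sum_congr rfl fun l hl => ?_)
  rw [mem_range] at hl
  rw [smul_pow, smul_mulVec, hpow, if_pos (by omega), smul_smul, inv_mul_eq_div]

end Matrix

open Matrix

theorem generalized_koopman_eigenfunction_evolution_general {n : ℕ}
    (A : Matrix (Fin n) (Fin n) ℂ) (lam : ℂ) (m : ℕ)
    (w : ℕ → Fin n → ℂ)
    (hchain : ∀ i, 1 ≤ i → i < m →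
      A.conjTranspose.mulVec (w i) = (starRingEnd ℂ) lam • w i + w (i + 1))
    (hlast : A.conjTranspose.mulVec (w m) = (starRingEnd ℂ) lam • w m) :
    ∀ (t : ℝ) (x : Fin n → ℂ) (i : ℕ), 1 ≤ i → i ≤ m →
      ∑ k, (NormedSpace.exp ((t : ℂ) • A)).mulVec x k * (starRingEnd ℂ) (w i k)
        = Complex.exp (lam * t) *
            ∑ l ∈ Finset.range (m - i + 1),
              ((t : ℂ) ^ l / (l.factorial : ℂ)) *
                ∑ k, x k * (starRingEnd ℂ) (w (i + l) k) := by
  intro t x i hi him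
  have hadj : (exp ((t : ℂ) • A))ᴴ = exp ((t : ℂ) • Aᴴ) := by
    rw [← exp_conjTranspose, conjTranspose_smul, Complex.star_def, Complex.conj_ofReal]
  have hevol := exp_smul_mulVec_of_chain Aᴴ _ hchain hlast hi him (t : ℂ)
  have hconj : star (Complex.exp (t * starRingEnd ℂ lam)) = Complex.exp (lam * t) := by
    rw [Complex.star_def, ← Complex.exp_conj, map_mul, Complex.conj_ofReal, Complex.conj_conj,
      mul_comm]
  change exp ((t : ℂ) • A) *ᵥ x ⬝ᵥ star (w i) = Complex.exp (lam * t) *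
    ∑ l ∈ range (m - i + 1), ((t : ℂ) ^ l / l !) * (x ⬝ᵥ star (w (i + l)))
  rw [mulVec_dotProduct_star, hadj, hevol, ← Complex.exp_eq_exp_ℂ, star_smul, hconj,
    dotProduct_smul, star_sum, dotProduct_sum, smul_eq_mul]
  simp [dotProduct_smul]

/-- Evolution of generalized Koopman eigenfunctions `φⁱ(x) = ⟨x, wⁱ⟩` built from a Jordan
chain `w¹, …, w^m` of the adjoint `Aᴴ` at `conj λ`:
`⟨exp(tA)x, wⁱ⟩ = e^{λt} Σ_{n=0}^{m-i} (tⁿ/n!) ⟨x, w^{i+n}⟩`. -/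
theorem generalized_koopman_eigenfunction_evolution {n : ℕ}
    (A : Matrix (Fin n) (Fin n) ℂ) (lam : ℂ) (m : ℕ) (hm : 1 ≤ m)
    (w : ℕ → Fin n → ℂ)
    (hchain : ∀ i, 1 ≤ i → i < m →
      A.conjTranspose.mulVec (w i) = (starRingEnd ℂ) lam • w i + w (i + 1))
    (hlast : A.conjTranspose.mulVec (w m) = (starRingEnd ℂ) lam • w m) :
    ∀ (t : ℝ) (x : Fin n → ℂ) (i : ℕ), 1 ≤ i → i ≤ m →
      ∑ k, (NormedSpace.exp ((t : ℂ) • A)).mulVec x k * (starRingEnd ℂ) (w i k)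
        = Complex.exp (lam * t) *
            ∑ l ∈ Finset.range (m - i + 1),
              ((t : ℂ) ^ l / (l.factorial : ℂ)) *
                ∑ k, x k * (starRingEnd ℂ) (w (i + l) k) :=
  generalized_koopman_eigenfunction_evolution_general A lam m w hchain hlast
end

section
/- Let A be an n×n complex matrix, regarded as a linear endomorphism of ℂⁿ. Then for x ∈ ℂⁿ, exp(tA) x → 0 as t → +∞ if and only if x belongs to the sum of the maximal generalized eigenspaces ⋃-span ⨆_{λ : Re λ < 0} ker((A − λI)ⁿ) of A over eigenvalues λ with negative real part. That is, the stable subspace E^s, defined dynamically as the set of initial conditions whose trajectories under ẋ = Ax converge to the origin as t → +∞, equals the span of the generalized eigenvectors of A corresponding to eigenvalues with negative real part. -/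
/-!
Writing `A = μ • 1 + (A - μ • 1)`, on the generalized eigenspace of `μ` the flow is
`exp (t A) x = e^{t μ} ∑_{j < n} t^j / j! (A - μ)^j x`, which decays when `Re μ < 0`.
Conversely, the stable subspace is `A`-invariant, hence the sum of its intersections with the
generalized eigenspaces. For `Re μ ≥ 0` such an intersection is zero: by induction on the
nilpotency order it would otherwise contain an eigenvector `w`, and `‖exp (t A) w‖ =
e^{t Re μ} ‖w‖ ≥ ‖w‖`.
-/

open Filter Topology NormedSpace Finset
open scoped Nat

theorem Complex.tendsto_exp_mul_mul_pow_atTop {μ : ℂ} (hμ : μ.re < 0) (j : ℕ) :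
    Tendsto (fun t : ℝ => Complex.exp (t * μ) * (t : ℂ) ^ j) atTop (𝓝 0) := by
  rw [tendsto_zero_iff_norm_tendsto_zero]
  refine (tendsto_rpow_mul_exp_neg_mul_atTop_nhds_zero j (-μ.re) (neg_pos.mpr hμ)).congr' ?_
  filter_upwards [eventually_ge_atTop 0] with t ht
  rw [norm_mul, Complex.norm_exp, norm_pow, Complex.norm_real, Real.norm_of_nonneg ht,
    Real.rpow_natCast, Complex.re_ofReal_mul]
  ring_nf

namespace Matrix

variable {m : Type*} [Fintype m] [DecidableEq m]

theorem hasSum_exp_mulVec (N : Matrix m m ℂ) (x : m → ℂ) :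
    HasSum (fun k => (k !⁻¹ : ℂ) • (N ^ k *ᵥ x)) (exp N *ᵥ x) := by
  have hs : Summable fun k => (k !⁻¹ : ℂ) • N ^ k := by
    open scoped Norms.Operator in exact expSeries_summable' N
  rw [exp_eq_tsum ℂ]
  simpa only [mulVec.addMonoidHomLeft, AddMonoidHom.coe_mk, ZeroHom.coe_mk, Function.comp_def,
    smul_mulVec] using
    hs.hasSum.map (mulVec.addMonoidHomLeft x) (continuous_id.matrix_mulVec continuous_const)

theorem exp_mulVec_eq_sum_of_pow_mulVec_eq_zero {N : Matrix m m ℂ} {x : m → ℂ} {k : ℕ}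
    (h : N ^ k *ᵥ x = 0) :
    exp N *ᵥ x = ∑ j ∈ range k, (j !⁻¹ : ℂ) • (N ^ j *ᵥ x) := by
  refine (hasSum_exp_mulVec N x).unique (hasSum_sum_of_ne_finset_zero fun j hj => ?_)
  rw [← Nat.sub_add_cancel (not_lt.mp (mem_range.not.mp hj)), pow_add, ← mulVec_mulVec, h,
    mulVec_zero, smul_zero]

theorem exp_smul_one (c : ℂ) : exp (c • (1 : Matrix m m ℂ)) = Complex.exp c • 1 := by
  rw [← Algebra.algebraMap_eq_smul_one, ← Algebra.algebraMap_eq_smul_one, Complex.exp_eq_exp_ℂ]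
  open scoped Norms.Operator in
  exact (map_exp (algebraMap ℂ (Matrix m m ℂ)) (continuous_algebraMap ℂ _) c).symm

theorem exp_eq_cexp_smul_exp_sub (A : Matrix m m ℂ) (μ : ℂ) :
    exp A = Complex.exp μ • exp (A - μ • 1) := by
  conv_lhs => rw [← add_sub_cancel (μ • 1) A]
  rw [exp_add_of_commute _ _ ((Commute.one_left _).smul_left μ), exp_smul_one, smul_one_mul]

theorem exp_smul_mulVec_of_pow_sub_mulVec_eq_zero {A : Matrix m m ℂ} {μ : ℂ} {x : m → ℂ}
    {k : ℕ} (h : (A - μ • 1) ^ k *ᵥ x = 0) (t : ℂ) :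
    exp (t • A) *ᵥ x =
      ∑ j ∈ range k, (Complex.exp (t * μ) * t ^ j * (j !⁻¹ : ℂ)) • ((A - μ • 1) ^ j *ᵥ x) := by
  have hsub : t • A - (t * μ) • 1 = t • (A - μ • 1) := by rw [smul_sub, smul_smul]
  have htk : (t • (A - μ • 1)) ^ k *ᵥ x = 0 := by rw [smul_pow, smul_mulVec, h, smul_zero]
  rw [exp_eq_cexp_smul_exp_sub _ (t * μ), hsub, smul_mulVec,
    exp_mulVec_eq_sum_of_pow_mulVec_eq_zero htk, smul_sum]
  refine sum_congr rfl fun j _ => ?_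
  rw [smul_pow, smul_mulVec, smul_smul, smul_smul, mul_right_comm]

def stableSubspace (A : Matrix m m ℂ) : Submodule ℂ (m → ℂ) where
  carrier := {x | Tendsto (fun t : ℝ => exp ((t : ℂ) • A) *ᵥ x) atTop (𝓝 0)}
  add_mem' hx hy := by simpa only [Set.mem_ofPred_eq, mulVec_add, add_zero] using hx.add hy
  zero_mem' := by simpa only [Set.mem_ofPred_eq, mulVec_zero] using tendsto_const_nhds
  smul_mem' c x hx := by
    simpa only [Set.mem_ofPred_eq, mulVec_smul, smul_zero] using hx.const_smul c

theorem mem_stableSubspace {A : Matrix m m ℂ} {x : m → ℂ} :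
    x ∈ A.stableSubspace ↔ Tendsto (fun t : ℝ => exp ((t : ℂ) • A) *ᵥ x) atTop (𝓝 0) :=
  Iff.rfl

theorem mulVec_mem_stableSubspace {A B : Matrix m m ℂ} (hAB : Commute A B) {x : m → ℂ}
    (hx : x ∈ A.stableSubspace) : B *ᵥ x ∈ A.stableSubspace := by
  have hcomm (t : ℝ) : exp ((t : ℂ) • A) *ᵥ (B *ᵥ x) = B *ᵥ (exp ((t : ℂ) • A) *ᵥ x) := by
    rw [mulVec_mulVec, mulVec_mulVec, ((hAB.smul_left (t : ℂ)).symm.exp_right).eq]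
  have hB := (((continuous_const (y := B)).matrix_mulVec continuous_id).tendsto 0).comp hx
  simp only [Function.comp_def, id, mulVec_zero] at hB
  exact mem_stableSubspace.mpr (hB.congr fun t => (hcomm t).symm)

theorem mem_stableSubspace_of_pow_sub_mulVec_eq_zero {A : Matrix m m ℂ} {μ : ℂ} (hμ : μ.re < 0)
    {x : m → ℂ} {k : ℕ} (h : (A - μ • 1) ^ k *ᵥ x = 0) : x ∈ A.stableSubspace := by
  simp_rw [mem_stableSubspace, exp_smul_mulVec_of_pow_sub_mulVec_eq_zero h]
  rw [← sum_const_zero (s := range k)]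
  refine tendsto_finsetSum _ fun j _ => ?_
  simpa using ((Complex.tendsto_exp_mul_mul_pow_atTop hμ j).mul_const (j !⁻¹ : ℂ)).smul_const
    ((A - μ • 1) ^ j *ᵥ x)

theorem eq_zero_of_mem_stableSubspace_of_sub_mulVec_eq_zero {A : Matrix m m ℂ} {μ : ℂ}
    (hμ : 0 ≤ μ.re) {w : m → ℂ} (hw : (A - μ • 1) *ᵥ w = 0) (hs : w ∈ A.stableSubspace) :
    w = 0 := by
  have hexp (t : ℝ) : exp ((t : ℂ) • A) *ᵥ w = Complex.exp (t * μ) • w := by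
    simpa using exp_smul_mulVec_of_pow_sub_mulVec_eq_zero (k := 1) (by rwa [pow_one]) (t : ℂ)
  have hle : ∀ᶠ t : ℝ in atTop, ‖w‖ ≤ ‖exp ((t : ℂ) • A) *ᵥ w‖ := by
    filter_upwards [eventually_ge_atTop 0] with t ht
    rw [hexp, norm_smul, Complex.norm_exp, Complex.re_ofReal_mul]
    exact le_mul_of_one_le_left (norm_nonneg w) (Real.one_le_exp (mul_nonneg ht hμ))
  simpa using ge_of_tendsto (mem_stableSubspace.mp hs).norm hle

theorem eq_zero_of_mem_stableSubspace_of_pow_sub_mulVec_eq_zero {A : Matrix m m ℂ} {μ : ℂ}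
    (hμ : 0 ≤ μ.re) {k : ℕ} : ∀ {y : m → ℂ}, (A - μ • 1) ^ k *ᵥ y = 0 →
      y ∈ A.stableSubspace → y = 0 := by
  induction k with
  | zero => simp
  | succ k ih =>
    intro y hy hs
    have hAy : (A - μ • 1) *ᵥ y = 0 := by
      refine ih ?_ (mulVec_mem_stableSubspace ?_ hs)
      · rwa [mulVec_mulVec, ← pow_succ]
      · exact (Commute.refl A).sub_right ((Commute.one_right A).smul_right μ)
    exact eq_zero_of_mem_stableSubspace_of_sub_mulVec_eq_zero hμ hAy hs

theorem maxGenEigenspace_toLin' (A : Matrix m m ℂ) (μ : ℂ) :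
    Module.End.maxGenEigenspace (toLin' A) μ =
      LinearMap.ker (toLin' ((A - μ • 1) ^ Fintype.card m)) := by
  rw [Module.End.maxGenEigenspace_eq_genEigenspace_finrank, Module.finrank_fintype_fun_eq_card,
    Module.End.genEigenspace_nat, toLin'_pow, map_sub, map_smul, toLin'_one]
  rfl

theorem stableSubspace_eq_iSup (A : Matrix m m ℂ) :
    A.stableSubspace =
      ⨆ μ : {μ : ℂ // μ.re < 0}, LinearMap.ker (toLin' ((A - (μ : ℂ) • 1) ^ Fintype.card m)) := by
  refine le_antisymm ?_ (iSup_le fun μ x hx => mem_stableSubspace_of_pow_sub_mulVec_eq_zero μ.2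
    (by rwa [LinearMap.mem_ker, toLin'_apply] at hx))
  have hinv : ∀ x ∈ A.stableSubspace, toLin' A x ∈ A.stableSubspace := fun x hx => by
    rw [toLin'_apply]; exact mulVec_mem_stableSubspace (Commute.refl A) hx
  calc A.stableSubspace
      = A.stableSubspace ⊓ ⨆ μ, Module.End.maxGenEigenspace (toLin' A) μ := by
        rw [Module.End.iSup_maxGenEigenspace_eq_top, inf_top_eq]
    _ = ⨆ μ, A.stableSubspace ⊓ Module.End.maxGenEigenspace (toLin' A) μ :=
        Submodule.inf_iSup_genEigenspace hinv ⊤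
    _ ≤ _ := iSup_le fun μ => ?_
  rw [maxGenEigenspace_toLin']
  by_cases hμ : μ.re < 0
  · exact inf_le_right.trans (le_iSup_of_le ⟨μ, hμ⟩ le_rfl)
  · intro y hy
    obtain ⟨hys, hyker⟩ := Submodule.mem_inf.mp hy
    rw [LinearMap.mem_ker, toLin'_apply] at hyker
    rw [eq_zero_of_mem_stableSubspace_of_pow_sub_mulVec_eq_zero (not_lt.mp hμ) hyker hys]
    exact zero_mem _

end Matrix

/-- Dynamical characterization of the stable subspace of `ẋ = Ax`:
`exp(tA)x → 0` as `t → +∞` iff `x` lies in the sum of the maximal generalized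
eigenspaces of `A` over eigenvalues with negative real part. -/
theorem stable_subspace_eq_sum_generalized_eigenspaces {n : ℕ}
    (A : Matrix (Fin n) (Fin n) ℂ) (x : Fin n → ℂ) :
    Filter.Tendsto (fun t : ℝ => (NormedSpace.exp ((t : ℂ) • A)).mulVec x)
        Filter.atTop (nhds 0)
      ↔ x ∈ ⨆ lam : {μ : ℂ // μ.re < 0},
          LinearMap.ker (Matrix.toLin' ((A - (lam : ℂ) • 1) ^ n)) := by
  have h := A.stableSubspace_eq_iSup
  rw [Fintype.card_fin] at h
  exact SetLike.ext_iff.mp h x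
end

section
/- Let A be an n×n complex matrix and let Aᴴ be its conjugate transpose. For x ∈ ℂⁿ, x belongs to ⨆_{λ : Re λ < 0} ker((A − λI)ⁿ) (the sum of maximal generalized eigenspaces of A over eigenvalues with negative real part) if and only if ⟨x, w⟩ = 0 for every λ ∈ ℂ with Re λ ≥ 0 and every w ∈ ker((Aᴴ − \overline{λ} I)ⁿ). That is, the stable subspace of the linear system ẋ = Ax is exactly the joint zero level set of the (generalized) Koopman eigenfunctions φ(x) = ⟨x, w⟩ associated with eigenvalues of nonnegative real part. -/
/-!
Since `(Aᴴ - conj λ)ⁿ = ((A - λ)ⁿ)ᴴ` and `ker Tᴴ = (range T)ᗮ`, the right-hand side says that `x`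
lies in `range (A - λ)ⁿ` for every `λ` with `Re λ ≥ 0`. The intersection `W` of these ranges is
`A`-invariant, so it is the sum of its intersections with the generalized eigenspaces `E_μ` of `A`.
By Fitting's lemma `range (A - λ)ⁿ` meets `E_λ` trivially, so only the `E_μ` with `Re μ < 0`
contribute to `W`; conversely `(A - λ)ⁿ` is invertible on `E_μ` for `μ ≠ λ`, so `E_μ ⊆ W`
when `Re μ < 0`.
-/

open scoped Matrix ComplexConjugate

namespace Module.End

variable {K V : Type*} [Field K] [AddCommGroup V] [Module K V] (f : Module.End K V)

lemma commute_sub_smul_one_pow (ν : K) (k : ℕ) : Commute f ((f - ν • 1) ^ k) :=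
  ((Commute.refl f).sub_right ((Commute.one_right f).smul_right ν)).pow_right k

variable [FiniteDimensional K V]

lemma maxGenEigenspace_le_range_pow {μ ν : K} (hμν : μ ≠ ν) (k : ℕ) :
    f.maxGenEigenspace μ ≤ LinearMap.range ((f - ν • 1) ^ k) := by
  set g := (f - ν • 1) ^ k
  have hmaps : Set.MapsTo g (f.maxGenEigenspace μ) (f.maxGenEigenspace μ) :=
    f.mapsTo_maxGenEigenspace_of_comm (f.commute_sub_smul_one_pow ν k) μ
  have hinj : Set.InjOn g (f.maxGenEigenspace μ) := by
    refine LinearMap.injOn_of_disjoint_ker subset_rfl ?_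
    refine (f.independent_maxGenEigenspace.pairwiseDisjoint hμν).mono_right ?_
    rw [← genEigenspace_nat]
    exact (f.genEigenspace ν).monotone le_top
  intro v hv
  obtain ⟨u, -, rfl⟩ := (LinearMap.injOn_iff_surjOn hmaps).mp hinj hv
  exact LinearMap.mem_range_self g u

theorem iSup_maxGenEigenspace_eq_iInf_range_pow [IsAlgClosed K] (p : K → Prop) :
    ⨆ μ : {μ // p μ}, f.maxGenEigenspace μ =
      ⨅ (ν) (_ : ¬ p ν), LinearMap.range ((f - ν • 1) ^ finrank K V) := by
  set W := ⨅ (ν) (_ : ¬ p ν), LinearMap.range ((f - ν • 1) ^ finrank K V)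
  refine le_antisymm (iSup_le fun μ => le_iInf₂ fun ν hν =>
    f.maxGenEigenspace_le_range_pow (by rintro rfl; exact hν μ.2) _) ?_
  have hW : ∀ x ∈ W, f x ∈ W := by
    simp only [W, Submodule.mem_iInf, LinearMap.mem_range]
    rintro x hx ν hν
    obtain ⟨u, rfl⟩ := hx ν hν
    exact ⟨f u, (LinearMap.congr_fun (f.commute_sub_smul_one_pow ν _).eq u).symm⟩
  rw [Submodule.eq_iSup_inf_genEigenspace ⊤ hW f.iSup_maxGenEigenspace_eq_top]
  refine iSup_le fun μ => ?_
  by_cases hμ : p μ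
  · exact inf_le_right.trans (le_iSup (fun μ : {μ // p μ} => f.maxGenEigenspace μ) ⟨μ, hμ⟩)
  · calc W ⊓ f.maxGenEigenspace μ
        ≤ LinearMap.range ((f - μ • 1) ^ finrank K V) ⊓ f.maxGenEigenspace μ :=
          inf_le_inf_right _ (iInf₂_le μ hμ)
      _ = ⊥ := by
          rw [maxGenEigenspace_eq_genEigenspace_finrank, ← genEigenrange_nat]
          exact (f.generalized_eigenvec_disjoint_range_ker μ).eq_bot
      _ ≤ _ := bot_le

end Module.End

namespace Matrix

lemma toLin'_sub_smul_one_pow {R n : Type*} [CommRing R] [Fintype n] [DecidableEq n]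
    (A : Matrix n n R) (μ : R) (k : ℕ) :
    toLin' ((A - μ • 1) ^ k) = (toLin' A - μ • 1) ^ k := by
  simp [Module.End.one_eq_id]

lemma conjTranspose_sub_smul_one_pow {R n : Type*} [CommRing R] [StarRing R] [Fintype n]
    [DecidableEq n] (A : Matrix n n R) (μ : R) (k : ℕ) :
    ((A - μ • 1) ^ k)ᴴ = (Aᴴ - starRingEnd R μ • 1) ^ k := by
  simp [conjTranspose_pow, starRingEnd_apply]

lemma mem_range_toLin'_iff_forall_mem_ker_conjTranspose {𝕜 m n : Type*} [RCLike 𝕜] [Fintype m]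
    [Fintype n] [DecidableEq m] [DecidableEq n] (M : Matrix m n 𝕜) (x : m → 𝕜) :
    x ∈ LinearMap.range (toLin' M) ↔
      ∀ w ∈ LinearMap.ker (toLin' Mᴴ), ∑ i, x i * conj (w i) = 0 := by
  have hrange : LinearMap.range (toEuclideanLin M) = (LinearMap.ker (toEuclideanLin Mᴴ))ᗮ := by
    rw [toEuclideanLin_conjTranspose_eq_adjoint, ← LinearMap.orthogonal_range,
      Submodule.orthogonal_orthogonal]
  have hx : x ∈ LinearMap.range (toLin' M) ↔
      WithLp.toLp 2 x ∈ LinearMap.range (toEuclideanLin M) :=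
    ⟨fun ⟨y, hy⟩ => ⟨WithLp.toLp 2 y, by rw [toLpLin_toLp, hy]⟩,
      fun ⟨y, hy⟩ => ⟨WithLp.ofLp y, congrArg WithLp.ofLp hy⟩⟩
  rw [hx, hrange, Submodule.mem_orthogonal]
  refine (WithLp.toLp_surjective 2).forall.trans (forall_congr' fun w => ?_)
  simp [toLpLin_toLp, EuclideanSpace.inner_eq_star_dotProduct, dotProduct]

end Matrix

/-- The stable subspace of `ẋ = Ax` (the sum of generalized eigenspaces of `A` over
eigenvalues with negative real part) is the joint zero level set of the generalized
Koopman eigenfunctions `φ(x) = ⟨x, w⟩`, `w ∈ ker((Aᴴ − conj(λ) I)ⁿ)`, associated with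
eigenvalues `λ` of nonnegative real part. -/
theorem stable_subspace_eq_joint_zero_level_set {n : ℕ}
    (A : Matrix (Fin n) (Fin n) ℂ) (x : Fin n → ℂ) :
    x ∈ ⨆ lam : {μ : ℂ // μ.re < 0},
        LinearMap.ker (Matrix.toLin' ((A - (lam : ℂ) • 1) ^ n))
      ↔ ∀ lam : ℂ, 0 ≤ lam.re →
          ∀ w ∈ LinearMap.ker (Matrix.toLin'
              ((A.conjTranspose - (starRingEnd ℂ) lam • 1) ^ n)),
            ∑ i, x i * (starRingEnd ℂ) (w i) = 0 := by
  set f : Module.End ℂ (Fin n → ℂ) := Matrix.toLin' A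
  have hdim : Module.finrank ℂ (Fin n → ℂ) = n := Module.finrank_fin_fun ℂ
  have hker (μ : ℂ) : LinearMap.ker (Matrix.toLin' ((A - μ • 1) ^ n)) = f.maxGenEigenspace μ := by
    rw [Matrix.toLin'_sub_smul_one_pow, f.maxGenEigenspace_eq_genEigenspace_finrank, hdim,
      Module.End.genEigenspace_nat]
  have hrange (μ : ℂ) : (∀ w ∈ LinearMap.ker (Matrix.toLin' ((Aᴴ - conj μ • 1) ^ n)),
      ∑ i, x i * conj (w i) = 0) ↔
        x ∈ LinearMap.range ((f - μ • 1) ^ Module.finrank ℂ (Fin n → ℂ)) := by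
    rw [← Matrix.conjTranspose_sub_smul_one_pow,
      ← Matrix.mem_range_toLin'_iff_forall_mem_ker_conjTranspose, hdim,
      Matrix.toLin'_sub_smul_one_pow]
  have hstable := f.iSup_maxGenEigenspace_eq_iInf_range_pow (·.re < 0)
  simp only [not_lt] at hstable
  simp only [hker, hstable, Submodule.mem_iInf, hrange]
end

section
/- Let A : ℝ → ℝ be continuous and 2π-periodic, and set A* = (1/2π) ∫₀^{2π} A(u) du. Fix m ∈ ℕ and n ∈ ℤ, and define, for y ∈ ℝ and s ∈ ℝ, the complex-valued function g_{m,n}(y, s) = y^m · exp(−m ∫₀^{s} (A(u) − A*) du) · e^{i n s}. Then for every s₀ ∈ ℝ, y₀ ∈ ℝ, and t ∈ ℝ, g_{m,n}( y₀ · exp(∫₀^{t} A(s₀ + u) du), s₀ + t ) = e^{(m A* + i n) t} · g_{m,n}(y₀, s₀). That is, g_{m,n} is an eigenfunction of the Koopman operator family of the system ẏ = A(s) y, ṡ = 1, at the lattice eigenvalue m A* + i n. -/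
/-- Lattice eigenfunctions of the planar skew-linear system `ẏ = A(s)y, ṡ = 1`:
`g_{m,n}(y,s) = y^m exp(−m ∫₀^s (A(u) − A*) du) e^{ins}` is a Koopman eigenfunction at
the lattice eigenvalue `m A* + i n`. -/
theorem koopman_lattice_eigenfunction_planar_limit_cycle
    (A : ℝ → ℝ) (hA : Continuous A)
    (hper : ∀ u : ℝ, A (u + 2 * Real.pi) = A u)
    (Astar : ℝ)
    (hAstar : Astar = (1 / (2 * Real.pi)) * ∫ u in (0:ℝ)..(2 * Real.pi), A u)
    (m : ℕ) (nn : ℤ) (g : ℝ → ℝ → ℂ)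
    (hg : ∀ y s : ℝ,
      g y s = (y : ℂ) ^ m
        * Complex.exp (-(m : ℂ) * ((∫ u in (0:ℝ)..s, (A u - Astar) : ℝ) : ℂ))
        * Complex.exp (Complex.I * (nn : ℂ) * (s : ℂ))) :
    ∀ (s₀ y₀ t : ℝ),
      g (y₀ * Real.exp (∫ u in (0:ℝ)..t, A (s₀ + u))) (s₀ + t)
        = Complex.exp (((m : ℂ) * (Astar : ℂ) + Complex.I * (nn : ℂ)) * (t : ℂ)) * g y₀ s₀ := by
  intro s₀ y₀ t
  set I1 : ℝ := ∫ u in (0:ℝ)..s₀, (A u - Astar) with hI1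
  set I2 : ℝ := ∫ u in (0:ℝ)..(s₀ + t), (A u - Astar) with hI2
  set J : ℝ := ∫ u in (0:ℝ)..t, A (s₀ + u) with hJ
  have hint : ∀ a b : ℝ, IntervalIntegrable (fun u => A u - Astar) MeasureTheory.volume a b :=
    fun a b => (hA.sub continuous_const).intervalIntegrable a b
  have hJ' : J = ∫ u in s₀..(s₀ + t), A u := by
    rw [hJ, intervalIntegral.integral_comp_add_left (fun u => A u) s₀]
    simp
  have key : I2 = I1 + J - Astar * t := by
    have h1 : I1 + (∫ u in s₀..(s₀ + t), (A u - Astar)) = I2 :=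
      intervalIntegral.integral_add_adjacent_intervals (hint 0 s₀) (hint s₀ (s₀ + t))
    have h2 : (∫ u in s₀..(s₀ + t), (A u - Astar))
        = (∫ u in s₀..(s₀ + t), A u) - Astar * t := by
      rw [intervalIntegral.integral_sub (hA.intervalIntegrable _ _)
        (intervalIntegrable_const), intervalIntegral.integral_const]
      simp [mul_comm]
    rw [← h1, h2, hJ']
    ring
  rw [hg, hg]
  push_cast
  rw [mul_pow, ← Complex.exp_nat_mul]
  have comb : ∀ (z a b c : ℂ), z * Complex.exp a * Complex.exp b * Complex.exp c
      = z * Complex.exp (a + b + c) := by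
    intros; rw [Complex.exp_add, Complex.exp_add]; ring
  have comb2 : ∀ (z d e f : ℂ), Complex.exp d * (z * Complex.exp e * Complex.exp f)
      = z * Complex.exp (d + e + f) := by
    intros; rw [Complex.exp_add, Complex.exp_add]; ring
  rw [comb, comb2]
  congr 2
  have hc : ((∫ u in (0:ℝ)..(s₀ + t), (A u - Astar) : ℝ) : ℂ)
      = ((∫ u in (0:ℝ)..s₀, (A u - Astar) : ℝ) : ℂ) + (J : ℂ) - (Astar : ℂ) * (t : ℂ) := by
    have := congrArg (fun r : ℝ => (r : ℂ)) key
    push_cast at this ⊢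
    simpa using this
  rw [hc]
  ring
end
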